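/- arXiv:2406.17900 — 3 statements merged into one kernel-verified Lean document; each statement's English description precedes it below -/
import Mathlib

section
/- Let N ∈ ℕ, let p₁,…,p_N > 0, and for ρ in D = {ρ ∈ (0,1)^N : Σᵢ ρᵢ < 1} define ρ₀ = 1 - Σᵢ ρᵢ, the diffusion matrix A(ρ) by A_{ii}(ρ) = pᵢ ρᵢ(1-ρᵢ) and A_{ji}(ρ) = -pᵢ ρᵢ ρⱼ for j ≠ i, and the Hessian matrix H(ρ) with entries H_{ij} = δ_{ij}/ρᵢ + 1/ρ₀. Then A(ρ)^T H(ρ) equals the diagonal matrix diag(p₁,…,p_N). -/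
/-!
Write `ρ₀ = 1 - ∑ ρᵢ` and `𝟙` for the all-ones vector. Then `A = (I - ρ 𝟙ᵀ) diag(ρ p)` and
`H = diag(ρ⁻¹) + ρ₀⁻¹ 𝟙 𝟙ᵀ`. Since `(I - 𝟙 ρᵀ) diag(ρ⁻¹) = diag(ρ⁻¹) - 𝟙 𝟙ᵀ` and
`(I - 𝟙 ρᵀ) 𝟙 𝟙ᵀ = ρ₀ 𝟙 𝟙ᵀ`, the rank-one parts cancel and `(I - 𝟙 ρᵀ) H = diag(ρ⁻¹)`; hence
`Aᵀ H = diag(ρ p) diag(ρ⁻¹) = diag(p)`.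
-/

open Matrix

section

variable {K n : Type*} [Fintype n] [DecidableEq n]

theorem one_sub_vecMulVec_mul_vecMulVec_one [CommRing K] (ρ : n → K) :
    (1 - vecMulVec 1 ρ) * vecMulVec 1 1 = (1 - ∑ i, ρ i) • vecMulVec (1 : n → K) 1 := by
  rw [sub_mul, one_mul, vecMulVec_mul_vecMulVec, dotProduct_one, vecMulVec_smul, sub_smul, one_smul]

theorem one_sub_vecMulVec_mul_diagonal_inv [Field K] {ρ : n → K} (hρ : ∀ i, ρ i ≠ 0) :
    (1 - vecMulVec 1 ρ) * diagonal ρ⁻¹ = diagonal ρ⁻¹ - vecMulVec 1 1 := by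
  have : ρ ᵥ* diagonal ρ⁻¹ = 1 := by
    ext i; simp [vecMul_diagonal, hρ]
  rw [sub_mul, one_mul, vecMulVec_mul, this]

variable [Field K]

noncomputable def entropyHessian (ρ : n → K) : Matrix n n K :=
  diagonal ρ⁻¹ + (1 - ∑ i, ρ i)⁻¹ • vecMulVec 1 1

def diffusionMatrix (p ρ : n → K) : Matrix n n K :=
  (1 - vecMulVec ρ 1) * diagonal (ρ * p)

theorem diffusionMatrix_transpose (p ρ : n → K) :
    (diffusionMatrix p ρ)ᵀ = diagonal (ρ * p) * (1 - vecMulVec 1 ρ) := by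
  rw [diffusionMatrix, transpose_mul, diagonal_transpose, transpose_sub, transpose_one,
    transpose_vecMulVec]

theorem one_sub_vecMulVec_mul_entropyHessian {ρ : n → K} (hρ : ∀ i, ρ i ≠ 0)
    (hsum : ∑ i, ρ i ≠ 1) :
    (1 - vecMulVec 1 ρ) * entropyHessian ρ = diagonal ρ⁻¹ := by
  have h : (1 - ∑ i, ρ i)⁻¹ * (1 - ∑ i, ρ i) = 1 := inv_mul_cancel₀ (sub_ne_zero.2 hsum.symm)
  rw [entropyHessian, mul_add, one_sub_vecMulVec_mul_diagonal_inv hρ, mul_smul_comm,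
    one_sub_vecMulVec_mul_vecMulVec_one, smul_smul, h, one_smul, sub_add_cancel]

theorem diffusionMatrix_transpose_mul_entropyHessian (p : n → K) {ρ : n → K}
    (hρ : ∀ i, ρ i ≠ 0) (hsum : ∑ i, ρ i ≠ 1) :
    (diffusionMatrix p ρ)ᵀ * entropyHessian ρ = diagonal p := by
  rw [diffusionMatrix_transpose, Matrix.mul_assoc, one_sub_vecMulVec_mul_entropyHessian hρ hsum,
    diagonal_mul_diagonal]
  congr 1
  ext i
  simp only [Pi.mul_apply, Pi.inv_apply]
  field_simp [hρ i]

end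

theorem volume_filling_matrix_identity_general {N : ℕ} (p ρ : Fin N → ℝ)
    (hρ : ∀ i, ρ i ∈ Set.Ioo (0:ℝ) 1)
    (hsum : ∑ i, ρ i < 1)
    (A H : Matrix (Fin N) (Fin N) ℝ)
    (hA : ∀ i j, A j i = if j = i then p i * ρ i * (1 - ρ i) else -(p i * ρ i * ρ j))
    (hH : ∀ i j, H i j = (if i = j then 1 / ρ i else 0) + 1 / (1 - ∑ k, ρ k)) :
    Aᵀ * H = Matrix.diagonal p := by
  have hA' : A = diffusionMatrix p ρ := by
    ext j i
    rw [hA, diffusionMatrix, mul_diagonal, Matrix.sub_apply, one_apply, vecMulVec_apply]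
    simp only [Pi.mul_apply, Pi.one_apply]
    split_ifs with hji
    · subst hji; ring
    · ring
  have hH' : H = entropyHessian ρ := by
    ext i j
    simp [hH, entropyHessian, diagonal_apply]
  rw [hA', hH']
  exact diffusionMatrix_transpose_mul_entropyHessian p (fun i => (hρ i).1.ne') hsum.ne

theorem volume_filling_matrix_identity {N : ℕ} (p ρ : Fin N → ℝ)
    (hp : ∀ i, 0 < p i) (hρ : ∀ i, ρ i ∈ Set.Ioo (0:ℝ) 1)
    (hsum : ∑ i, ρ i < 1)
    (A H : Matrix (Fin N) (Fin N) ℝ)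
    (hA : ∀ i j, A j i = if j = i then p i * ρ i * (1 - ρ i) else -(p i * ρ i * ρ j))
    (hH : ∀ i j, H i j = (if i = j then 1 / ρ i else 0) + 1 / (1 - ∑ k, ρ k)) :
    Aᵀ * H = Matrix.diagonal p :=
  volume_filling_matrix_identity_general p ρ hρ hsum A H hA hH
end

section
/- Let β > 0 and θ > 0, and for ρ = (ρ₁, ρ₂) in D = {ρ ∈ (0,1)² : ρ₁ + ρ₂ < 1} consider the matrix M(ρ) = [[2, βθρ₂], [0, 2β(θρ₁ + 1)]]. If θ < 4/√β, then there exists γ > 0 such that for all ρ ∈ D and all z ∈ ℝ², z · (M(ρ) z) ≥ γ |z|². If θ = 4/√β, no such uniform γ > 0 exists (the infimum of the smallest eigenvalue of the symmetric part over D is 0). -/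
open Matrix Real

set_option maxHeartbeats 1000000 in
theorem tumor_growth_positivity (β θ : ℝ) (hβ : 0 < β) (hθ : 0 < θ) :
    let D : Set (Fin 2 → ℝ) :=
      {ρ | ρ 0 ∈ Set.Ioo (0:ℝ) 1 ∧ ρ 1 ∈ Set.Ioo (0:ℝ) 1 ∧ ρ 0 + ρ 1 < 1}
    let M : (Fin 2 → ℝ) → Matrix (Fin 2) (Fin 2) ℝ :=
      fun ρ => !![2, β * θ * ρ 1; 0, 2 * β * (θ * ρ 0 + 1)]
    (θ < 4 / Real.sqrt β →
      ∃ γ > 0, ∀ ρ ∈ D, ∀ z : Fin 2 → ℝ, γ * (z ⬝ᵥ z) ≤ z ⬝ᵥ (M ρ *ᵥ z)) ∧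
    (θ = 4 / Real.sqrt β →
      ¬ ∃ γ > 0, ∀ ρ ∈ D, ∀ z : Fin 2 → ℝ, γ * (z ⬝ᵥ z) ≤ z ⬝ᵥ (M ρ *ᵥ z)) := by
  intro D M
  have hs : (0:ℝ) < Real.sqrt β := Real.sqrt_pos.mpr hβ
  have hss : Real.sqrt β * Real.sqrt β = β := Real.mul_self_sqrt hβ.le
  constructor
  · intro hlt
    have h4 : θ * Real.sqrt β < 4 := by rwa [lt_div_iff₀ hs] at hlt
    have hb2 : β * θ ^ 2 < 16 := by nlinarith [mul_pos hθ hs]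
    set ε : ℝ := 16 * β - β ^ 2 * θ ^ 2 with hεdef
    have hε : 0 < ε := by nlinarith
    refine ⟨min 1 (min β (ε / (8 + 8 * β))), by positivity, ?_⟩
    intro ρ hρ z
    obtain ⟨⟨h01, h11⟩, ⟨h02, h12⟩, hsum⟩ := hρ
    set γ : ℝ := min 1 (min β (ε / (8 + 8 * β))) with hγdef
    have hγ0 : 0 < γ := by positivity
    have hγ1 : γ ≤ 1 := min_le_left _ _
    have hγβ : γ ≤ β := le_trans (min_le_right _ _) (min_le_left _ _)
    have hγε : (8 + 8 * β) * γ ≤ ε := by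
      have h1 : γ ≤ ε / (8 + 8 * β) :=
        le_trans (min_le_right 1 _) (min_le_right β _)
      rw [le_div_iff₀ (by positivity : (0:ℝ) < 8 + 8 * β)] at h1
      linarith
    have hc : 2 * β ≤ 2 * β * (θ * ρ 0 + 1) := by
      nlinarith [mul_pos (mul_pos hβ hθ) h01]
    have hρ1sq : ρ 1 ^ 2 ≤ 1 := by nlinarith
    have hbb : (β * θ * ρ 1) ^ 2 ≤ β ^ 2 * θ ^ 2 := by
      nlinarith [sq_nonneg (β * θ), hρ1sq]
    have hdisc : (β * θ * ρ 1) ^ 2 ≤ 4 * (2 - γ) * (2 * β * (θ * ρ 0 + 1) - γ) := by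
      nlinarith [sq_nonneg γ]
    have key : 0 ≤ (4 * (2 - γ) * (2 * β * (θ * ρ 0 + 1) - γ) - (β * θ * ρ 1) ^ 2) * (z 1) ^ 2 :=
      mul_nonneg (by linarith) (sq_nonneg _)
    show γ * (z ⬝ᵥ z) ≤ z ⬝ᵥ (!![2, β * θ * ρ 1; 0, 2 * β * (θ * ρ 0 + 1)] *ᵥ z)
    simp only [dotProduct, Matrix.mulVec, Fin.sum_univ_two]
    simp
    nlinarith [key, sq_nonneg (2 * (2 - γ) * z 0 + β * θ * ρ 1 * z 1), sq_nonneg (z 0),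
      sq_nonneg (z 1), hγ1]
  · intro heq
    rintro ⟨γ, hγ, h⟩
    have hθs : θ * Real.sqrt β = 4 := by
      rw [heq]; field_simp
    have hden : 0 < 8 * β + 2 * β * θ := by positivity
    obtain ⟨δ, hδ0, hδ4, hδ2⟩ :
        ∃ δ : ℝ, 0 < δ ∧ δ ≤ 1/4 ∧ δ * (8 * β + 2 * β * θ) ≤ γ * (β + 1) / 2 := by
      refine ⟨min (1/4) (γ * (β + 1) / (2 * (8 * β + 2 * β * θ))), by positivity,
        min_le_left _ _, ?_⟩
      have h1 : min (1/4) (γ * (β + 1) / (2 * (8 * β + 2 * β * θ)))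
          ≤ γ * (β + 1) / (2 * (8 * β + 2 * β * θ)) := min_le_right _ _
      have h2 := mul_le_mul_of_nonneg_right h1 hden.le
      have h3 : γ * (β + 1) / (2 * (8 * β + 2 * β * θ)) * (8 * β + 2 * β * θ)
          = γ * (β + 1) / 2 := by field_simp
      linarith [h2, h3.le]
    have hmem : (![δ, 1 - 2*δ] : Fin 2 → ℝ) ∈ D := by
      simp only [D, Set.mem_setOf_eq, Set.mem_Ioo, Matrix.cons_val_zero,
        Matrix.cons_val_one, Matrix.head_cons]
      refine ⟨⟨hδ0, ?_⟩, ⟨?_, ?_⟩, ?_⟩ <;> linarith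
    have hkey := h _ hmem ![Real.sqrt β, -1]
    simp [M, Matrix.mulVec, dotProduct, Fin.sum_univ_two] at hkey
    -- hkey : γ * (√β * √β + 1) ≤ √β * (2 * √β + -(β * θ * (1 - 2 * δ))) + 2 * β * (θ * δ + 1)
    have h1 : β * θ * (1 - 2 * δ) * Real.sqrt β = 4 * β * (1 - 2 * δ) := by
      rw [show β * θ * (1 - 2 * δ) * Real.sqrt β = β * (1 - 2 * δ) * (θ * Real.sqrt β) by ring,
        hθs]; ring
    have hβ1 : 0 < γ * (β + 1) := by positivity
    nlinarith [hkey, hδ2, hss, h1, hβ1, hγ]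
end

section
/- Let (a,b) ⊂ ℝ and a partition a = x₀ < x₁ < … < x_M = b with hᵢ = xᵢ - x_{i-1}. For any piecewise C¹ function v on the partition (piecewise polynomial suffices), and any x ∈ (a,b), |v(x)| ≤ |v(a)| + Σᵢ hᵢ^{1/2} ‖v'‖_{L²(xᵢ₋₁,xᵢ)} + Σᵢ ĥ(xᵢ)^{1/2} ĥ(xᵢ)^{-1/2} |v(xᵢ⁺) - v(xᵢ⁻)|, and consequently ‖v‖_{L^∞(a,b)} ≤ |v(a)| + (b-a)^{1/2} ‖v'‖_{L²} + (Σᵢ ĥ(xᵢ))^{1/2} (Σᵢ ĥ(xᵢ)^{-1} |v(xᵢ⁺) - v(xᵢ⁻)|²)^{1/2}, where ĥ(xᵢ) = min(hᵢ, hᵢ₊₁). -/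
/-!
On each cell the fundamental theorem of calculus and the Cauchy–Schwarz inequality bound the
oscillation of `v k` by `h k ^ (1/2) * ‖(v k)'‖_{L²}`. Walking from `x 0` to `ξ` cell by cell, the
value changes by at most these oscillations plus the jumps at the interior nodes. The second bound
follows from the first by the discrete Cauchy–Schwarz inequality, once each jump is written as
`ĥ ^ (1/2) * (ĥ ^ (-1/2) * J)`.
-/

open Real Set MeasureTheory

theorem sq_integral_le_measureReal_univ_mul_integral_sq {α : Type*} [MeasurableSpace α]
    {μ : Measure α} [IsFiniteMeasure μ] {f : α → ℝ} (hf : Integrable f μ)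
    (hf2 : Integrable (fun a => f a ^ 2) μ) :
    (∫ a, f a ∂μ) ^ 2 ≤ μ.real univ * ∫ a, f a ^ 2 ∂μ := by
  -- the quadratic `c ↦ ∫ (f - c) ^ 2` is nonnegative, so its discriminant is nonpositive
  have hquad : ∀ c : ℝ,
      0 ≤ μ.real univ * (c * c) + (-2 * ∫ a, f a ∂μ) * c + ∫ a, f a ^ 2 ∂μ := by
    intro c
    have hexpand : ∫ a, (f a - c) ^ 2 ∂μ
        = μ.real univ * (c * c) + (-2 * ∫ a, f a ∂μ) * c + ∫ a, f a ^ 2 ∂μ := by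
      have hlin : Integrable (fun a => 2 * f a * c) μ := (hf.const_mul 2).mul_const c
      have hq : Integrable (fun a => f a ^ 2 - 2 * f a * c) μ := hf2.sub hlin
      simp_rw [sub_sq]
      rw [integral_add hq (integrable_const _), integral_sub hf2 hlin,
        integral_mul_const, integral_const_mul, integral_const, smul_eq_mul]
      ring
    exact hexpand ▸ integral_nonneg fun a => sq_nonneg _
  have := discrim_le_zero hquad
  rw [discrim] at this
  linarith

theorem sq_intervalIntegral_le {f : ℝ → ℝ} {a b : ℝ} (hab : a ≤ b)
    (hf : IntervalIntegrable f volume a b)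
    (hf2 : IntervalIntegrable (fun t => f t ^ 2) volume a b) :
    (∫ t in a..b, f t) ^ 2 ≤ (b - a) * ∫ t in a..b, f t ^ 2 := by
  rw [intervalIntegral.integral_of_le hab, intervalIntegral.integral_of_le hab,
    ← Real.volume_real_Ioc_of_le hab, ← measureReal_restrict_apply_univ]
  have : IsFiniteMeasure (volume.restrict (Ioc a b)) :=
    isFiniteMeasure_restrict.2 measure_Ioc_lt_top.ne
  exact sq_integral_le_measureReal_univ_mul_integral_sq hf.1 hf2.1

theorem abs_sub_le_sqrt_mul_sqrt_integral_deriv_sq {f : ℝ → ℝ} (hf : ContDiff ℝ 1 f)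
    {a b ξ : ℝ} (hξ : ξ ∈ Icc a b) :
    |f ξ - f a| ≤ √(b - a) * √(∫ t in a..b, deriv f t ^ 2) := by
  obtain ⟨haξ, hξb⟩ := hξ
  have hf' : Continuous (deriv f) := hf.continuous_deriv le_rfl
  have hftc : ∫ t in a..ξ, deriv f t = f ξ - f a :=
    intervalIntegral.integral_deriv_eq_sub
      (fun t _ => (hf.differentiable one_ne_zero).differentiableAt) (hf'.intervalIntegrable a ξ)
  calc |f ξ - f a| ≤ √((ξ - a) * ∫ t in a..ξ, deriv f t ^ 2) :=
        hftc ▸ abs_le_sqrt (sq_intervalIntegral_le haξ (hf'.intervalIntegrable a ξ)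
          ((hf'.pow 2).intervalIntegrable a ξ))
    _ ≤ √((b - a) * ∫ t in a..b, deriv f t ^ 2) := by
        refine sqrt_le_sqrt (mul_le_mul (by linarith) ?_
          (intervalIntegral.integral_nonneg haξ fun t _ => sq_nonneg _) (by linarith))
        exact intervalIntegral.integral_mono_interval le_rfl haξ hξb
          (Filter.Eventually.of_forall fun t => sq_nonneg _) ((hf'.pow 2).intervalIntegrable a b)
    _ = √(b - a) * √(∫ t in a..b, deriv f t ^ 2) := sqrt_mul (by linarith) _

theorem abs_le_abs_add_sum_add_sum_abs_jump {v : ℕ → ℝ → ℝ} {x T : ℕ → ℝ} (n : ℕ)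
    (hx : ∀ k < n, x k ≤ x (k + 1))
    (hT : ∀ k ≤ n, ∀ ξ ∈ Icc (x k) (x (k + 1)), |v k ξ - v k (x k)| ≤ T k) :
    ∀ ξ ∈ Icc (x n) (x (n + 1)), |v n ξ| ≤ |v 0 (x 0)| + ∑ k ∈ Finset.range (n + 1), T k
      + ∑ k ∈ Finset.Ico 1 (n + 1), |v k (x k) - v (k - 1) (x k)| := by
  induction n with
  | zero =>
    intro ξ hξ
    have := hT 0 le_rfl ξ hξ
    simp only [zero_add, Finset.range_one, Finset.sum_singleton, Finset.Ico_self,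
      Finset.sum_empty, add_zero]
    linarith [abs_sub_abs_le_abs_sub (v 0 ξ) (v 0 (x 0))]
  | succ n ih =>
    intro ξ hξ
    have hprev := ih (fun k hk => hx k (by omega)) (fun k hk => hT k (by omega))
      (x (n + 1)) ⟨hx n (by omega), le_rfl⟩
    have hcur := hT (n + 1) le_rfl ξ hξ
    rw [Finset.sum_range_succ, Finset.sum_Ico_succ_top (by omega), Nat.add_sub_cancel]
    linarith [abs_sub_abs_le_abs_sub (v (n + 1) ξ) (v (n + 1) (x (n + 1))),
      abs_sub_abs_le_abs_sub (v (n + 1) (x (n + 1))) (v n (x (n + 1)))]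

theorem Finset.sum_sqrt_mul_sqrt_le_of_nonneg {ι : Type*} (s : Finset ι) {f g : ι → ℝ}
    (hf : ∀ i ∈ s, 0 ≤ f i) (hg : ∀ i ∈ s, 0 ≤ g i) :
    ∑ i ∈ s, √(f i) * √(g i) ≤ √(∑ i ∈ s, f i) * √(∑ i ∈ s, g i) := by
  have := Real.sum_mul_le_sqrt_mul_sqrt s (fun i => √(f i)) (fun i => √(g i))
  rwa [Finset.sum_congr rfl fun i hi => sq_sqrt (hf i hi),
    Finset.sum_congr rfl fun i hi => sq_sqrt (hg i hi)] at this

theorem Finset.sum_le_sqrt_sum_mul_sqrt_sum_inv_mul_sq {ι : Type*} (s : Finset ι) {w y : ι → ℝ}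
    (hw : ∀ i ∈ s, 0 < w i) (hy : ∀ i ∈ s, 0 ≤ y i) :
    ∑ i ∈ s, y i ≤ √(∑ i ∈ s, w i) * √(∑ i ∈ s, (w i)⁻¹ * y i ^ 2) := by
  have hsplit : ∀ i ∈ s, y i = √(w i) * √((w i)⁻¹ * y i ^ 2) := fun i hi => by
    rw [← sqrt_mul (hw i hi).le, ← mul_assoc, mul_inv_cancel₀ (hw i hi).ne', one_mul,
      sqrt_sq (hy i hi)]
  rw [Finset.sum_congr rfl hsplit]
  exact s.sum_sqrt_mul_sqrt_le_of_nonneg (fun i hi => (hw i hi).le)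
    (fun i hi => mul_nonneg (inv_nonneg.2 (hw i hi).le) (sq_nonneg _))

theorem discrete_sobolev_1d_general (M : ℕ) (x : ℕ → ℝ)
    (hx : ∀ i < M, x i < x (i + 1))
    (v : ℕ → ℝ → ℝ) (hv : ∀ i < M, ContDiff ℝ 1 (v i)) :
    let h : ℕ → ℝ := fun i => x (i + 1) - x i
    let hhat : ℕ → ℝ := fun i => min (h (i - 1)) (h i)
    let J : ℕ → ℝ := fun i => |v i (x i) - v (i - 1) (x i)|
    (∀ i < M, ∀ ξ ∈ Set.Icc (x i) (x (i + 1)),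
      |v i ξ| ≤ |v 0 (x 0)|
        + (∑ k ∈ Finset.range M,
            Real.sqrt (h k) * Real.sqrt (∫ t in (x k)..(x (k + 1)), (deriv (v k) t) ^ 2))
        + ∑ k ∈ Finset.Ico 1 M, Real.sqrt (hhat k) * (Real.sqrt (hhat k))⁻¹ * J k) ∧
    (∀ i < M, ∀ ξ ∈ Set.Icc (x i) (x (i + 1)),
      |v i ξ| ≤ |v 0 (x 0)|
        + Real.sqrt (x M - x 0) *
            Real.sqrt (∑ k ∈ Finset.range M, ∫ t in (x k)..(x (k + 1)), (deriv (v k) t) ^ 2)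
        + Real.sqrt (∑ k ∈ Finset.Ico 1 M, hhat k) *
            Real.sqrt (∑ k ∈ Finset.Ico 1 M, (hhat k)⁻¹ * (J k) ^ 2)) := by
  intro h hhat J
  set I : ℕ → ℝ := fun k => ∫ t in (x k)..(x (k + 1)), (deriv (v k) t) ^ 2
  have hh : ∀ k < M, 0 < h k := fun k hk => sub_pos.2 (hx k hk)
  have hhat_pos : ∀ k ∈ Finset.Ico 1 M, 0 < hhat k := fun k hk => by
    obtain ⟨-, hkM⟩ := Finset.mem_Ico.1 hk
    exact lt_min (hh (k - 1) (by omega)) (hh k hkM)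
  have hbound : ∀ i < M, ∀ ξ ∈ Icc (x i) (x (i + 1)),
      |v i ξ| ≤ |v 0 (x 0)| + ∑ k ∈ Finset.range M, √(h k) * √(I k)
        + ∑ k ∈ Finset.Ico 1 M, J k := by
    intro i hi ξ hξ
    refine (abs_le_abs_add_sum_add_sum_abs_jump (v := v) (T := fun k => √(h k) * √(I k)) i
      (fun k hk => (hx k (by omega)).le)
      (fun k hk η hη => abs_sub_le_sqrt_mul_sqrt_integral_deriv_sq (hv k (by omega)) hη)
      ξ hξ).trans ?_
    gcongr |v 0 (x 0)| + ?_ + ?_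
    · exact Finset.sum_le_sum_of_subset_of_nonneg (Finset.range_subset_range.2 hi)
        fun k _ _ => by positivity
    · exact Finset.sum_le_sum_of_subset_of_nonneg (Finset.Ico_subset_Ico le_rfl hi)
        fun k _ _ => abs_nonneg _
  refine ⟨fun i hi ξ hξ => ?_, fun i hi ξ hξ => (hbound i hi ξ hξ).trans ?_⟩
  · have hcancel : ∑ k ∈ Finset.Ico 1 M, √(hhat k) * (√(hhat k))⁻¹ * J k
        = ∑ k ∈ Finset.Ico 1 M, J k := Finset.sum_congr rfl fun k hk => by
      rw [mul_inv_cancel₀ (sqrt_pos.2 (hhat_pos k hk)).ne', one_mul]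
    exact hcancel ▸ hbound i hi ξ hξ
  · have hlength : ∑ k ∈ Finset.range M, h k = x M - x 0 := Finset.sum_range_sub x M
    gcongr
    · exact hlength ▸ (Finset.range M).sum_sqrt_mul_sqrt_le_of_nonneg
        (fun k hk => (hh k (Finset.mem_range.1 hk)).le)
        (fun k hk => intervalIntegral.integral_nonneg (hx k (Finset.mem_range.1 hk)).le
          fun t _ => sq_nonneg _)
    · exact (Finset.Ico 1 M).sum_le_sqrt_sum_mul_sqrt_sum_inv_mul_sq hhat_pos
        fun k _ => abs_nonneg _

theorem discrete_sobolev_1d (M : ℕ) (hM : 1 ≤ M) (x : ℕ → ℝ)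
    (hx : ∀ i < M, x i < x (i + 1))
    (v : ℕ → ℝ → ℝ) (hv : ∀ i < M, ContDiff ℝ 1 (v i)) :
    let h : ℕ → ℝ := fun i => x (i + 1) - x i
    let hhat : ℕ → ℝ := fun i => min (h (i - 1)) (h i)
    let J : ℕ → ℝ := fun i => |v i (x i) - v (i - 1) (x i)|
    (∀ i < M, ∀ ξ ∈ Set.Icc (x i) (x (i + 1)),
      |v i ξ| ≤ |v 0 (x 0)|
        + (∑ k ∈ Finset.range M,
            Real.sqrt (h k) * Real.sqrt (∫ t in (x k)..(x (k + 1)), (deriv (v k) t) ^ 2))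
        + ∑ k ∈ Finset.Ico 1 M, Real.sqrt (hhat k) * (Real.sqrt (hhat k))⁻¹ * J k) ∧
    (∀ i < M, ∀ ξ ∈ Set.Icc (x i) (x (i + 1)),
      |v i ξ| ≤ |v 0 (x 0)|
        + Real.sqrt (x M - x 0) *
            Real.sqrt (∑ k ∈ Finset.range M, ∫ t in (x k)..(x (k + 1)), (deriv (v k) t) ^ 2)
        + Real.sqrt (∑ k ∈ Finset.Ico 1 M, hhat k) *
            Real.sqrt (∑ k ∈ Finset.Ico 1 M, (hhat k)⁻¹ * (J k) ^ 2)) :=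
  discrete_sobolev_1d_general M x hx v hv
end
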